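/- arXiv:2601.03387 — 3 statements merged into one kernel-verified Lean document; each statement's English description precedes it below -/
import Mathlib

section
/- Let N ≥ 1 and let W_1,…,W_N be i.i.d. Exp(1) random variables and θ_1,…,θ_N be i.i.d. U(−π/2, π/2) random variables, with all 2N variables mutually independent. Define Z_i = √(2 W_i) · cos(θ_i + π/4), Z̃_i = √(2 W_i) · sin(θ_i + π/4), T = N^{−1/2} Σ_{i=1}^N Z_i and T̃ = N^{−1/2} Σ_{i=1}^N Z̃_i. Then for every ρ > 0, 1 − E[(1 − Q(√ρ · T))·(1 − Q(√ρ · T̃))] ≥ 2^{−1−2N}. (Error floor of the QPSK-modulated 1-bit phase-quantized SIMO-MRC system, implying zero diversity gain.) -/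
open MeasureTheory ProbabilityTheory Real

/-- The Gaussian Q-function `Q(x) = (1/√(2π)) ∫_x^∞ e^{−t²/2} dt`. -/
noncomputable def gaussQ (x : ℝ) : ℝ :=
  (Real.sqrt (2 * Real.pi))⁻¹ * ∫ t in Set.Ioi x, Real.exp (-t ^ 2 / 2)

/-- The uniform probability measure on the open interval `(a, b)`. -/
noncomputable def unifOn (a b : ℝ) : Measure ℝ :=
  (ENNReal.ofReal (b - a))⁻¹ • (volume.restrict (Set.Ioo a b))

/-!
On the event `A` that every `θ i` lies in `(π/4, π/2)`, each
`cos (θ i + π/4)` is nonpositive, so `T ≤ 0` and `Q(√ρ T) ≥ 1/2`; by independence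
`P A = 4⁻¹ ^ N`. Since `1 - (1 - q)(1 - q') ≥ q` for `q, q' ∈ [0, 1]`, the error
probability is at least `E[Q(√ρ T)] ≥ (1/2) · 4⁻¹ ^ N`.
-/

lemma integrable_exp_neg_sq_div_two : Integrable fun t : ℝ => exp (-t ^ 2 / 2) := by
  convert integrable_exp_neg_mul_sq (b := 1 / 2) (by norm_num) using 2 with t
  ring_nf

lemma gaussQ_nonneg (x : ℝ) : 0 ≤ gaussQ x := by
  unfold gaussQ
  positivity

lemma gaussQ_le_one (x : ℝ) : gaussQ x ≤ 1 := by
  have htotal : ∫ t : ℝ, exp (-t ^ 2 / 2) = √(2 * π) := by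
    rw [show (2 : ℝ) * π = π / (1 / 2) by ring, ← integral_gaussian]
    congr 1 with t
    ring_nf
  unfold gaussQ
  rw [inv_mul_le_iff₀ (by positivity), mul_one, ← htotal]
  exact setIntegral_le_integral integrable_exp_neg_sq_div_two
    (.of_forall fun t => (exp_pos _).le)

lemma gaussQ_antitone : Antitone gaussQ := fun x y hxy => by
  unfold gaussQ
  gcongr ?_ * ?_
  exact setIntegral_mono_set integrable_exp_neg_sq_div_two.integrableOn
    (.of_forall fun t => (exp_pos _).le) (Set.Ioi_subset_Ioi hxy).eventuallyLE

lemma gaussQ_zero : gaussQ 0 = 1 / 2 := by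
  have hhalf : ∫ t in Set.Ioi (0 : ℝ), exp (-t ^ 2 / 2) = √(2 * π) / 2 := by
    rw [show (2 : ℝ) * π = π / (1 / 2) by ring, ← integral_gaussian_Ioi]
    congr 1 with t
    ring_nf
  unfold gaussQ
  rw [hhalf]
  field_simp

lemma one_half_le_gaussQ_of_nonpos {x : ℝ} (hx : x ≤ 0) : 1 / 2 ≤ gaussQ x :=
  gaussQ_zero ▸ gaussQ_antitone hx

lemma unifOn_apply_of_subset {a b : ℝ} {s : Set ℝ} (hs : s ⊆ Set.Ioo a b) :
    unifOn a b s = (ENNReal.ofReal (b - a))⁻¹ * volume s := by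
  rw [unifOn, Measure.smul_apply, Measure.restrict_apply' measurableSet_Ioo,
    Set.inter_eq_self_of_subset_left hs, smul_eq_mul]

lemma unifOn_Ioo_pi_div_four_pi_div_two :
    unifOn (-(π / 2)) (π / 2) (Set.Ioo (π / 4) (π / 2)) = 4⁻¹ := by
  have hsub : Set.Ioo (π / 4) (π / 2) ⊆ Set.Ioo (-(π / 2)) (π / 2) :=
    Set.Ioo_subset_Ioo_left (by linarith [pi_pos])
  rw [unifOn_apply_of_subset hsub, Real.volume_Ioo, show π / 2 - -(π / 2) = π by ring,
    show π / 2 - π / 4 = π * 4⁻¹ by ring, ENNReal.ofReal_mul pi_pos.le, ← mul_assoc,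
    ENNReal.inv_mul_cancel (by simp [pi_pos]) ENNReal.ofReal_ne_top, one_mul,
    ENNReal.ofReal_inv_of_pos (by norm_num)]
  norm_num

lemma ProbabilityTheory.iIndepFun.measure_iInter_preimage_eq_pow {Ω ι β : Type*}
    [MeasurableSpace Ω] [MeasurableSpace β] [Fintype ι] {P : Measure Ω} {μ : Measure β}
    {X : ι → Ω → β}
    (hindep : iIndepFun X P) (hX : ∀ i, Measurable (X i)) (hlaw : ∀ i, P.map (X i) = μ)
    {s : Set β} (hs : MeasurableSet s) :
    P (⋂ i, X i ⁻¹' s) = μ s ^ Fintype.card ι := by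
  rw [hindep.meas_iInter fun i => ⟨s, hs, rfl⟩, ← Finset.card_univ, ← Finset.prod_const]
  refine Finset.prod_congr rfl fun i _ => ?_
  rw [← hlaw i, Measure.map_apply (hX i) hs]

lemma cos_add_pi_div_four_nonpos {x : ℝ} (h₁ : π / 4 ≤ x) (h₂ : x ≤ π) :
    cos (x + π / 4) ≤ 0 :=
  cos_nonpos_of_pi_div_two_le_of_le (by linarith) (by linarith)

section Expectation

variable {Ω : Type*} [MeasurableSpace Ω] {P : Measure Ω}

lemma integrable_of_nonneg_of_le_one [IsFiniteMeasure P] {f : Ω → ℝ} (hf : Measurable f)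
    (hf₀ : ∀ ω, 0 ≤ f ω) (hf₁ : ∀ ω, f ω ≤ 1) : Integrable f P :=
  (integrable_const (1 : ℝ)).mono' hf.aestronglyMeasurable
    (.of_forall fun ω => by rw [norm_of_nonneg (hf₀ ω)]; exact hf₁ ω)

lemma integral_le_one_sub_integral_one_sub_mul_one_sub [IsProbabilityMeasure P]
    {f g : Ω → ℝ} (hf : Measurable f) (hg : Measurable g) (hf₀ : ∀ ω, 0 ≤ f ω)
    (hf₁ : ∀ ω, f ω ≤ 1) (hg₀ : ∀ ω, 0 ≤ g ω) (hg₁ : ∀ ω, g ω ≤ 1) :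
    ∫ ω, f ω ∂P ≤ 1 - ∫ ω, (1 - f ω) * (1 - g ω) ∂P := by
  have hprod : Integrable (fun ω => (1 - f ω) * (1 - g ω)) P :=
    integrable_of_nonneg_of_le_one (by fun_prop)
      (fun ω => mul_nonneg (sub_nonneg.2 (hf₁ ω)) (sub_nonneg.2 (hg₁ ω)))
      fun ω => mul_le_one₀ (by linarith [hf₀ ω]) (sub_nonneg.2 (hg₁ ω)) (by linarith [hg₀ ω])
  have hone_sub :
      1 - ∫ ω, (1 - f ω) * (1 - g ω) ∂P = ∫ ω, (1 - (1 - f ω) * (1 - g ω)) ∂P := by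
    rw [integral_sub (integrable_const 1) hprod, integral_const, probReal_univ, one_smul]
  rw [hone_sub]
  exact integral_mono (integrable_of_nonneg_of_le_one hf hf₀ hf₁)
    ((integrable_const _).sub hprod) fun ω => by nlinarith [hf₁ ω, hg₀ ω]

lemma mul_measureReal_le_integral_of_le_on [IsFiniteMeasure P] {f : Ω → ℝ} {A : Set Ω}
    {c : ℝ} (hf : Integrable f P) (hf₀ : ∀ ω, 0 ≤ f ω) (hA : MeasurableSet A)
    (hc : ∀ ω ∈ A, c ≤ f ω) :
    c * P.real A ≤ ∫ ω, f ω ∂P :=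
  (setIntegral_ge_of_const_le_real hA (measure_ne_top P A) hc hf.integrableOn).trans
    (setIntegral_le_integral hf (.of_forall hf₀))

end Expectation

theorem stmt3_general
    {Ω : Type*} [MeasurableSpace Ω] (P : Measure Ω) [IsProbabilityMeasure P]
    (N : ℕ)
    (W θ : Fin N → Ω → ℝ)
    (hWmeas : ∀ i, Measurable (W i)) (hθmeas : ∀ i, Measurable (θ i))
    (hθlaw : ∀ i, Measure.map (θ i) P = unifOn (-(π / 2)) (π / 2))
    (hindep : iIndepFun (Sum.elim W θ) P)
    (T Tt : Ω → ℝ)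
    (hT : T = fun ω => (Real.sqrt N)⁻¹ * ∑ i, Real.sqrt (2 * W i ω) * Real.cos (θ i ω + π / 4))
    (hTt : Tt = fun ω => (Real.sqrt N)⁻¹ * ∑ i, Real.sqrt (2 * W i ω) * Real.sin (θ i ω + π / 4))
    (ρ : ℝ) :
    1 - ∫ ω, (1 - gaussQ (Real.sqrt ρ * T ω)) * (1 - gaussQ (Real.sqrt ρ * Tt ω)) ∂P
      ≥ ((2 : ℝ) ^ (1 + 2 * N))⁻¹ := by
  set A := ⋂ i, θ i ⁻¹' Set.Ioo (π / 4) (π / 2)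
  have hPA : P.real A = 4⁻¹ ^ N := by
    have hθindep : iIndepFun θ P := hindep.precomp (g := Sum.inr) Sum.inr_injective
    rw [measureReal_def, hθindep.measure_iInter_preimage_eq_pow hθmeas hθlaw measurableSet_Ioo,
      unifOn_Ioo_pi_div_four_pi_div_two, Fintype.card_fin, ENNReal.toReal_pow, ENNReal.toReal_inv]
    norm_num
  have hT_nonpos : ∀ ω ∈ A, √ρ * T ω ≤ 0 := fun ω hω => by
    have hθω : ∀ i, θ i ω ∈ Set.Ioo (π / 4) (π / 2) := Set.mem_iInter.1 hω
    refine mul_nonpos_of_nonneg_of_nonpos (sqrt_nonneg _) ?_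
    rw [hT]
    refine mul_nonpos_of_nonneg_of_nonpos (by positivity) (Finset.sum_nonpos fun i _ => ?_)
    exact mul_nonpos_of_nonneg_of_nonpos (sqrt_nonneg _)
      (cos_add_pi_div_four_nonpos (hθω i).1.le (by linarith [(hθω i).2, pi_pos]))
  have hQ : Measurable gaussQ := gaussQ_antitone.measurable
  have hQT : Measurable fun ω => gaussQ (√ρ * T ω) := by
    rw [hT]
    exact hQ.comp (by fun_prop)
  have hQTt : Measurable fun ω => gaussQ (√ρ * Tt ω) := by
    rw [hTt]
    exact hQ.comp (by fun_prop)
  calc ((2 : ℝ) ^ (1 + 2 * N))⁻¹ = 1 / 2 * P.real A := by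
        rw [hPA, pow_add, pow_mul, inv_pow]
        norm_num
        ring
    _ ≤ ∫ ω, gaussQ (√ρ * T ω) ∂P :=
        mul_measureReal_le_integral_of_le_on
          (integrable_of_nonneg_of_le_one hQT (fun _ => gaussQ_nonneg _) fun _ => gaussQ_le_one _)
          (fun _ => gaussQ_nonneg _) (MeasurableSet.iInter fun i => hθmeas i measurableSet_Ioo)
          fun ω hω => one_half_le_gaussQ_of_nonpos (hT_nonpos ω hω)
    _ ≤ _ := integral_le_one_sub_integral_one_sub_mul_one_sub hQT hQTt
        (fun _ => gaussQ_nonneg _) (fun _ => gaussQ_le_one _) (fun _ => gaussQ_nonneg _)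
        fun _ => gaussQ_le_one _

/-- Error floor `2^{-1-2N}` of the QPSK-modulated 1-bit phase-quantized SIMO-MRC system. -/
theorem stmt3
    {Ω : Type*} [MeasurableSpace Ω] (P : Measure Ω) [IsProbabilityMeasure P]
    (N : ℕ) (hN : 1 ≤ N)
    (W θ : Fin N → Ω → ℝ)
    (hWmeas : ∀ i, Measurable (W i)) (hθmeas : ∀ i, Measurable (θ i))
    (hWlaw : ∀ i, Measure.map (W i) P = expMeasure 1)
    (hθlaw : ∀ i, Measure.map (θ i) P = unifOn (-(π / 2)) (π / 2))
    (hindep : iIndepFun (Sum.elim W θ) P)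
    (T Tt : Ω → ℝ)
    (hT : T = fun ω => (Real.sqrt N)⁻¹ * ∑ i, Real.sqrt (2 * W i ω) * Real.cos (θ i ω + π / 4))
    (hTt : Tt = fun ω => (Real.sqrt N)⁻¹ * ∑ i, Real.sqrt (2 * W i ω) * Real.sin (θ i ω + π / 4))
    (ρ : ℝ) (hρ : 0 < ρ) :
    1 - ∫ ω, (1 - gaussQ (Real.sqrt ρ * T ω)) * (1 - gaussQ (Real.sqrt ρ * Tt ω)) ∂P
      ≥ ((2 : ℝ) ^ (1 + 2 * N))⁻¹ :=
  stmt3_general P N W θ hWmeas hθmeas hθlaw hindep T Tt hT hTt ρ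
end

section
/- Let W be an Exp(1) random variable and θ an independent U(−π/4, π/4) random variable. Then the random variables X = W·(1 − sin 2θ) and Y = W·(1 + sin 2θ) are independent, and each of X and Y has the distribution of G² for a standard real Gaussian G (i.e., the chi-square distribution with one degree of freedom, equivalently the gamma distribution with shape 1/2 and rate 1/2). (Forward direction of Lemma 1: for 2-bit phase quantization, Z_i² and Z̃_i² are i.i.d.) -/
/-!
Write `(X, Y) = T (W, θ)` with `T (w, t) = (w (1 - sin 2t), w (1 + sin 2t))`. On
`(0, ∞) × (-π/4, π/4)` the map `T` is a bijection onto `(0, ∞)²` with Jacobian `4 w cos 2t`, and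
since `x y = (w cos 2t)²` and `x + y = 2 w` at `(x, y) = T (w, t)`, the product of two chi-square
densities at `T (w, t)` is `e^{-w} / (2 π w cos 2t)`. Hence the change of variables formula turns
the density `e^{-w} · 2/π` of `(W, θ)` into the product of two chi-square densities, which gives
independence and both marginals at once. The chi-square density itself comes from the Gaussian one
by the same formula, applied to `x ↦ x²` on each half-line.
-/

open MeasureTheory ProbabilityTheory Real Set
open scoped ENNReal

theorem map_withDensity_eq_withDensity_of_injOn {E : Type*} [NormedAddCommGroup E]
    [NormedSpace ℝ E] [FiniteDimensional ℝ E] [MeasurableSpace E] [BorelSpace E]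
    (μ : Measure E) [μ.IsAddHaarMeasure] {T : E → E} {T' : E → E →L[ℝ] E} {s : Set E}
    {f g : E → ℝ≥0∞} (hT : Measurable T) (hs : MeasurableSet s)
    (hT' : ∀ x ∈ s, HasFDerivWithinAt T (T' x) s x) (hinj : InjOn T s)
    (hf : ∀ᵐ x ∂μ, x ∉ s → f x = 0) (hg : ∀ᵐ y ∂μ, y ∉ T '' s → g y = 0)
    (hfg : ∀ x ∈ s, f x = ENNReal.ofReal |(T' x).det| * g (T x)) :
    (μ.withDensity f).map T = μ.withDensity g := by
  have hTs : MeasurableSet (T '' s) := measurable_image_of_fderivWithin hs hT' hinj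
  ext A hA
  rw [Measure.map_apply hT hA, withDensity_apply _ (hT hA), withDensity_apply _ hA]
  calc ∫⁻ x in T ⁻¹' A, f x ∂μ
      = ∫⁻ x in s, (T ⁻¹' A).indicator f x ∂μ := by
        rw [← lintegral_indicator (hT hA), ← lintegral_indicator hs]
        refine lintegral_congr_ae (hf.mono fun x hx => ?_)
        by_cases hxs : x ∈ s <;> simp [indicator, hxs, hx]
    _ = ∫⁻ x in s, ENNReal.ofReal |(T' x).det| * A.indicator g (T x) ∂μ := by
        refine setLIntegral_congr_fun hs fun x hx => ?_
        by_cases hxA : T x ∈ A <;> simp [indicator, hxA, hfg x hx]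
    _ = ∫⁻ y in A, g y ∂μ := by
        rw [← lintegral_image_eq_lintegral_abs_det_fderiv_mul μ hs hT' hinj,
          ← lintegral_indicator hTs, ← lintegral_indicator hA]
        refine lintegral_congr_ae (hg.mono fun y hy => ?_)
        by_cases hys : y ∈ T '' s <;> simp [indicator, hys, hy]

lemma indepFun_and_map_eq_of_map_prod_eq {Ω α β : Type*} [MeasurableSpace Ω] [MeasurableSpace α]
    [MeasurableSpace β] {P : Measure Ω} [IsProbabilityMeasure P] {X : Ω → α} {Y : Ω → β}
    {μ : Measure α} {ν : Measure β} [IsProbabilityMeasure μ] [IsProbabilityMeasure ν]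
    (hX : AEMeasurable X P) (hY : AEMeasurable Y P)
    (h : P.map (fun ω => (X ω, Y ω)) = μ.prod ν) :
    IndepFun X Y P ∧ P.map X = μ ∧ P.map Y = ν := by
  have hXlaw : P.map X = μ := calc
    P.map X = (P.map fun ω => (X ω, Y ω)).map Prod.fst :=
      (AEMeasurable.map_map_of_aemeasurable measurable_fst.aemeasurable (hX.prodMk hY)).symm
    _ = μ := by rw [h, Measure.map_fst_prod, measure_univ, one_smul]
  have hYlaw : P.map Y = ν := calc
    P.map Y = (P.map fun ω => (X ω, Y ω)).map Prod.snd :=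
      (AEMeasurable.map_map_of_aemeasurable measurable_snd.aemeasurable (hX.prodMk hY)).symm
    _ = ν := by rw [h, Measure.map_snd_prod, measure_univ, one_smul]
  refine ⟨?_, hXlaw, hYlaw⟩
  rw [indepFun_iff_map_prod_eq_prod_map_map hX hY, h, hXlaw, hYlaw]

noncomputable def chiSqPDF (x : ℝ) : ℝ≥0∞ :=
  ENNReal.ofReal (if 0 < x then (√(2 * π * x))⁻¹ * exp (-x / 2) else 0)

@[fun_prop]
lemma measurable_chiSqPDF : Measurable chiSqPDF :=
  (Measurable.ite measurableSet_Ioi (by fun_prop) measurable_const).ennreal_ofReal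

lemma chiSqPDF_of_nonpos {x : ℝ} (hx : x ≤ 0) : chiSqPDF x = 0 := by
  simp [chiSqPDF, hx.not_gt]

lemma chiSqPDF_of_pos {x : ℝ} (hx : 0 < x) :
    chiSqPDF x = ENNReal.ofReal ((√(2 * π * x))⁻¹ * exp (-x / 2)) := by
  simp [chiSqPDF, hx]

lemma ofReal_abs_two_mul_mul_chiSqPDF_sq {x : ℝ} (hx : x ≠ 0) :
    ENNReal.ofReal |2 * x| * chiSqPDF (x ^ 2) = 2 * gaussianPDF 0 1 x := by
  have habs : 0 < |x| := abs_pos.mpr hx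
  have hsqrt : √(2 * π * x ^ 2) = √(2 * π) * |x| := by
    rw [Real.sqrt_mul (by positivity), Real.sqrt_sq_eq_abs]
  rw [chiSqPDF_of_pos (by positivity), gaussianPDF, gaussianPDFReal, ← ENNReal.ofReal_mul
    (abs_nonneg _), ← ENNReal.ofReal_ofNat, ← ENNReal.ofReal_mul zero_le_two, hsqrt, abs_mul,
    abs_two]
  congr 1
  push_cast
  field_simp
  ring_nf

lemma image_sq_Ioi_zero : (· ^ 2) '' Ioi (0 : ℝ) = Ioi 0 := by
  ext y
  refine ⟨?_, fun hy => ⟨√y, Real.sqrt_pos.mpr hy, Real.sq_sqrt (le_of_lt hy)⟩⟩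
  rintro ⟨x, hx, rfl⟩
  exact pow_pos (mem_Ioi.mp hx) 2

lemma image_sq_Iio_zero : (· ^ 2) '' Iio (0 : ℝ) = Ioi 0 := by
  ext y
  refine ⟨?_, fun hy => ⟨-√y, neg_lt_zero.mpr (Real.sqrt_pos.mpr hy), ?_⟩⟩
  · rintro ⟨x, hx, rfl⟩
    exact pow_pos (neg_pos.mpr hx) 2 |>.trans_eq (neg_sq x)
  · simp [Real.sq_sqrt (le_of_lt hy)]

lemma injOn_sq_Ioi_zero : InjOn (· ^ 2 : ℝ → ℝ) (Ioi 0) :=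
  fun _ ha _ hb h => (sq_eq_sq₀ (le_of_lt ha) (le_of_lt hb)).mp h

lemma injOn_sq_Iio_zero : InjOn (· ^ 2 : ℝ → ℝ) (Iio 0) := fun a ha b hb h =>
  neg_injective <| (sq_eq_sq₀ (neg_nonneg.mpr (le_of_lt ha)) (neg_nonneg.mpr (le_of_lt hb))).mp
    (by simpa only [neg_sq] using h)

lemma map_sq_withDensity_indicator_gaussianPDF {s : Set ℝ} (hs : MeasurableSet s)
    (hinj : InjOn (· ^ 2) s) (himage : (· ^ 2) '' s = Ioi 0) :
    (volume.withDensity (s.indicator (gaussianPDF 0 1))).map (· ^ 2)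
      = volume.withDensity fun y => 2⁻¹ * chiSqPDF y := by
  refine map_withDensity_eq_withDensity_of_injOn volume (by fun_prop) hs
    (fun x _ => (hasDerivAt_pow 2 x).hasDerivWithinAt.hasFDerivWithinAt) hinj
    (ae_of_all _ fun x hx => indicator_of_notMem hx _) (ae_of_all _ fun y hy => ?_) fun x hx => ?_
  · rw [himage, mem_Ioi, not_lt] at hy
    rw [chiSqPDF_of_nonpos hy, mul_zero]
  · have hx0 : x ≠ 0 := by
      rintro rfl
      have h0 : (0 : ℝ) ^ 2 ∈ (· ^ 2) '' s := mem_image_of_mem _ hx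
      simp [himage] at h0
    rw [indicator_of_mem hx, ContinuousLinearMap.det_toSpanSingleton, mul_left_comm,
      pow_one, Nat.cast_ofNat, ofReal_abs_two_mul_mul_chiSqPDF_sq hx0, ← mul_assoc,
      ENNReal.inv_mul_cancel two_ne_zero ENNReal.ofNat_ne_top, one_mul]

theorem map_sq_gaussianReal :
    (gaussianReal 0 1).map (· ^ 2) = volume.withDensity chiSqPDF := by
  have hvol : (volume : Measure ℝ) = volume.restrict (Iio 0) + volume.restrict (Ioi 0) := by
    rw [Measure.restrict_congr_set Ioi_ae_eq_Ici, ← compl_Iio,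
      Measure.restrict_add_restrict_compl measurableSet_Iio]
  rw [gaussianReal_of_var_ne_zero 0 one_ne_zero, hvol, withDensity_add_measure,
    ← withDensity_indicator measurableSet_Iio, ← withDensity_indicator measurableSet_Ioi,
    Measure.map_add _ _ (by fun_prop),
    map_sq_withDensity_indicator_gaussianPDF measurableSet_Iio injOn_sq_Iio_zero image_sq_Iio_zero,
    map_sq_withDensity_indicator_gaussianPDF measurableSet_Ioi injOn_sq_Ioi_zero image_sq_Ioi_zero,
    ← withDensity_add_left (by fun_prop)]
  congr with y
  simp only [Pi.add_apply, ← add_mul, ENNReal.inv_two_add_inv_two, one_mul]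

lemma chiSqPDF_mul_chiSqPDF {x y : ℝ} (hx : 0 < x) (hy : 0 < y) :
    chiSqPDF x * chiSqPDF y = ENNReal.ofReal ((2 * π * √(x * y))⁻¹ * exp (-(x + y) / 2)) := by
  have hsqrt : √(2 * π * x) * √(2 * π * y) = 2 * π * √(x * y) := by
    rw [← Real.sqrt_mul (by positivity), show 2 * π * x * (2 * π * y) = (2 * π) ^ 2 * (x * y) by
      ring, Real.sqrt_mul (by positivity : (0 : ℝ) ≤ (2 * π) ^ 2), Real.sqrt_sq (by positivity)]
  have hexp : exp (-x / 2) * exp (-y / 2) = exp (-(x + y) / 2) := by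
    rw [← Real.exp_add]
    ring_nf
  rw [chiSqPDF_of_pos hx, chiSqPDF_of_pos hy, ← ENNReal.ofReal_mul (by positivity), ← hsqrt,
    ← hexp, mul_inv]
  ring_nf

noncomputable def phaseMap (p : ℝ × ℝ) : ℝ × ℝ :=
  (p.1 * (1 - sin (2 * p.2)), p.1 * (1 + sin (2 * p.2)))

noncomputable def fderivPhaseMap (p : ℝ × ℝ) : ℝ × ℝ →L[ℝ] ℝ × ℝ :=
  LinearMap.toContinuousLinearMap (Matrix.toLin (Module.Basis.finTwoProd ℝ)
    (Module.Basis.finTwoProd ℝ)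
    !![1 - sin (2 * p.2), -(2 * p.1 * cos (2 * p.2)); 1 + sin (2 * p.2), 2 * p.1 * cos (2 * p.2)])

lemma continuous_phaseMap : Continuous phaseMap := by
  unfold phaseMap
  fun_prop

lemma hasFDerivAt_phaseMap (p : ℝ × ℝ) : HasFDerivAt phaseMap (fderivPhaseMap p) p := by
  rw [fderivPhaseMap, Matrix.toLin_finTwoProd_toContinuousLinearMap]
  have hsin : HasFDerivAt (fun p : ℝ × ℝ => sin (2 * p.2))
      ((2 * cos (2 * p.2)) • ContinuousLinearMap.snd ℝ ℝ ℝ) p := by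
    have h2 : HasFDerivAt (fun p : ℝ × ℝ => 2 * p.2) ((2 : ℝ) • ContinuousLinearMap.snd ℝ ℝ ℝ) p :=
      hasFDerivAt_snd.const_mul 2
    have h := (hasDerivAt_sin (2 * p.2)).comp_hasFDerivAt p h2
    rwa [smul_smul, mul_comm] at h
  refine (hasFDerivAt_fst.mul (hsin.const_sub 1)).prodMk
    (hasFDerivAt_fst.mul (hsin.const_add 1)) |>.congr_fderiv ?_
  ext <;> simp only [ContinuousLinearMap.comp_apply, ContinuousLinearMap.inl_apply,
    ContinuousLinearMap.inr_apply, ContinuousLinearMap.prod_apply, add_apply,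
    neg_apply, smul_apply, ContinuousLinearMap.coe_fst',
    ContinuousLinearMap.coe_snd', smul_neg, smul_eq_mul] <;> ring

lemma det_fderivPhaseMap (p : ℝ × ℝ) : (fderivPhaseMap p).det = 4 * p.1 * cos (2 * p.2) := by
  simp only [fderivPhaseMap, LinearMap.det_toContinuousLinearMap, LinearMap.det_toLin,
    Matrix.det_fin_two_of]
  ring

lemma sin_two_mul_mem_Ioo {t : ℝ} (ht : t ∈ Ioo (-(π / 4)) (π / 4)) :
    sin (2 * t) ∈ Ioo (-1) 1 := by
  have hcos : 0 < cos (2 * t) := cos_pos_of_mem_Ioo ⟨by linarith [ht.1], by linarith [ht.2]⟩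
  have hpyth := sin_sq_add_cos_sq (2 * t)
  constructor <;> nlinarith

lemma injOn_phaseMap : InjOn phaseMap (Ioi 0 ×ˢ Ioo (-(π / 4)) (π / 4)) := by
  rintro ⟨w, t⟩ ⟨hw, ht⟩ ⟨w', t'⟩ ⟨hw', ht'⟩ h
  simp only [phaseMap, Prod.mk.injEq] at h
  obtain rfl : w = w' := by linarith [h.1, h.2]
  have hsin : sin (2 * t) = sin (2 * t') := by
    linarith [mul_left_cancel₀ (mem_Ioi.mp hw).ne' h.2]
  have h2t : 2 * t = 2 * t' := injOn_sin ⟨by linarith [ht.1], by linarith [ht.2]⟩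
    ⟨by linarith [ht'.1], by linarith [ht'.2]⟩ hsin
  simp only [Prod.mk.injEq, true_and]
  linarith

lemma image_phaseMap : phaseMap '' (Ioi 0 ×ˢ Ioo (-(π / 4)) (π / 4)) = Ioi 0 ×ˢ Ioi 0 := by
  ext ⟨x, y⟩
  simp only [mem_image, mem_prod, mem_Ioi, Prod.exists]
  constructor
  · rintro ⟨w, t, ⟨hw, ht⟩, h⟩
    obtain ⟨hs1, hs2⟩ := sin_two_mul_mem_Ioo ht
    simp only [phaseMap, Prod.mk.injEq] at h
    obtain ⟨rfl, rfl⟩ := h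
    exact ⟨mul_pos hw (by linarith), mul_pos hw (by linarith)⟩
  · rintro ⟨hx, hy⟩
    have hxy : 0 < x + y := by linarith
    set u := (y - x) / (x + y) with hu
    have hu1 : u < 1 := by rw [hu, div_lt_one hxy]; linarith
    have hu2 : -1 < u := by rw [hu, lt_div_iff₀ hxy]; linarith
    refine ⟨(x + y) / 2, arcsin u / 2, ⟨by positivity, ?_, ?_⟩, ?_⟩
    · linarith [neg_pi_div_two_lt_arcsin.mpr hu2]
    · linarith [arcsin_lt_pi_div_two.mpr hu1]
    · have h2 : 2 * (arcsin u / 2) = arcsin u := by ring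
      simp only [phaseMap, h2, sin_arcsin hu2.le hu1.le, Prod.mk.injEq]
      rw [hu]
      constructor <;> field_simp <;> ring

lemma exponentialPDF_mul_eq_abs_det_mul_chiSqPDF {w t : ℝ} (hw : 0 < w)
    (ht : t ∈ Ioo (-(π / 4)) (π / 4)) :
    exponentialPDF 1 w * (ENNReal.ofReal (π / 2))⁻¹ = ENNReal.ofReal |(fderivPhaseMap (w, t)).det|
      * (chiSqPDF (phaseMap (w, t)).1 * chiSqPDF (phaseMap (w, t)).2) := by
  obtain ⟨hs1, hs2⟩ := sin_two_mul_mem_Ioo ht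
  have hcos : 0 < cos (2 * t) := cos_pos_of_mem_Ioo ⟨by linarith [ht.1], by linarith [ht.2]⟩
  have hprod : w * (1 - sin (2 * t)) * (w * (1 + sin (2 * t))) = (w * cos (2 * t)) ^ 2 := by
    linear_combination -w ^ 2 * sin_sq_add_cos_sq (2 * t)
  rw [phaseMap, chiSqPDF_mul_chiSqPDF (mul_pos hw (by linarith)) (mul_pos hw (by linarith)),
    hprod, Real.sqrt_sq (by positivity), det_fderivPhaseMap, exponentialPDF_of_nonneg hw.le,
    ← ENNReal.ofReal_inv_of_pos (by positivity), ← ENNReal.ofReal_mul (by positivity),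
    ← ENNReal.ofReal_mul (abs_nonneg _), abs_of_pos (by positivity)]
  congr 1
  field_simp
  ring_nf

lemma unifOn_eq_withDensity (a b : ℝ) :
    unifOn a b = volume.withDensity ((Ioo a b).indicator fun _ => (ENNReal.ofReal (b - a))⁻¹) := by
  rw [withDensity_indicator measurableSet_Ioo, withDensity_const, unifOn]

theorem map_phaseMap_expMeasure_prod_unifOn :
    ((expMeasure 1).prod (unifOn (-(π / 4)) (π / 4))).map phaseMap
      = (volume.withDensity chiSqPDF).prod (volume.withDensity chiSqPDF) := by
  have hexp : expMeasure 1 = volume.withDensity (exponentialPDF 1) := rfl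
  rw [hexp, unifOn_eq_withDensity,
    prod_withDensity (f := exponentialPDF 1) (measurable_exponentialPDFReal 1).ennreal_ofReal
      (measurable_const.indicator measurableSet_Ioo),
    prod_withDensity measurable_chiSqPDF measurable_chiSqPDF, ← Measure.volume_eq_prod]
  refine map_withDensity_eq_withDensity_of_injOn volume continuous_phaseMap.measurable
    (measurableSet_Ioi.prod measurableSet_Ioo)
    (fun p _ => (hasFDerivAt_phaseMap p).hasFDerivWithinAt) injOn_phaseMap ?_
    (ae_of_all _ fun p hp => ?_) fun p hp => ?_
  -- `exponentialPDF 1 0 ≠ 0`: off the domain the density vanishes only away from `w = 0`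
  · have hfst : ∀ᵐ p : ℝ × ℝ, p.1 ≠ 0 := by
      rw [Measure.volume_eq_prod]
      exact Measure.quasiMeasurePreserving_fst.ae (Measure.ae_ne volume 0)
    filter_upwards [hfst] with p hp hps
    rcases hp.lt_or_gt with hneg | hpos
    · rw [exponentialPDF_of_neg hneg, zero_mul]
    · rw [indicator_of_notMem fun ht => hps ⟨hpos, ht⟩, mul_zero]
  · rw [image_phaseMap, mem_prod, mem_Ioi, mem_Ioi, not_and_or, not_lt, not_lt] at hp
    rcases hp with hp | hp <;> simp [chiSqPDF_of_nonpos hp]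
  · rw [indicator_of_mem hp.2, show π / 4 - -(π / 4) = π / 2 by ring]
    exact exponentialPDF_mul_eq_abs_det_mul_chiSqPDF hp.1 hp.2

/-- Forward direction of Lemma 1: for 2-bit phase quantization, `X = W(1 − sin 2θ)` and
`Y = W(1 + sin 2θ)` are independent, each distributed as the square of a standard real
Gaussian (chi-square with one degree of freedom). -/
theorem stmt6
    {Ω : Type*} [MeasurableSpace Ω] (P : Measure Ω) [IsProbabilityMeasure P]
    (W θ : Ω → ℝ) (hW : Measurable W) (hθ : Measurable θ)
    (hWlaw : Measure.map W P = expMeasure 1)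
    (hθlaw : Measure.map θ P = unifOn (-(π / 4)) (π / 4))
    (hindep : IndepFun W θ P) :
    IndepFun (fun ω => W ω * (1 - Real.sin (2 * θ ω)))
        (fun ω => W ω * (1 + Real.sin (2 * θ ω))) P
    ∧ Measure.map (fun ω => W ω * (1 - Real.sin (2 * θ ω))) P
        = Measure.map (fun g : ℝ => g ^ 2) (gaussianReal 0 1)
    ∧ Measure.map (fun ω => W ω * (1 + Real.sin (2 * θ ω))) P
        = Measure.map (fun g : ℝ => g ^ 2) (gaussianReal 0 1) := by
  have hWθ : P.map (fun ω => (W ω, θ ω)) = (expMeasure 1).prod (unifOn (-(π / 4)) (π / 4)) := by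
    rw [← hWlaw, ← hθlaw]
    exact (indepFun_iff_map_prod_eq_prod_map_map hW.aemeasurable hθ.aemeasurable).mp hindep
  have : IsProbabilityMeasure ((gaussianReal 0 1).map (· ^ 2)) :=
    Measure.isProbabilityMeasure_map (by fun_prop)
  refine indepFun_and_map_eq_of_map_prod_eq (by fun_prop) (by fun_prop) ?_
  calc P.map (fun ω => (W ω * (1 - sin (2 * θ ω)), W ω * (1 + sin (2 * θ ω))))
      = (P.map fun ω => (W ω, θ ω)).map phaseMap :=
        (Measure.map_map continuous_phaseMap.measurable (hW.prodMk hθ)).symm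
    _ = _ := by rw [hWθ, map_phaseMap_expMeasure_prod_unifOn, map_sq_gaussianReal]
end

section
/- Let n ≥ 3 be an integer, let W be an Exp(1) random variable and θ an independent U(−π/2^n, π/2^n) random variable. Then, as z → 0 from above, P( √(W·(1 − sin 2θ)) ≤ z ) = (2^{n−1}/π) · tan(π/2^{n−1}) · z² + o(z²). (Small-argument behavior of the per-branch statistic Z for n ≥ 3, corresponding to the density expansion f_Z(z) = (2^n/π)·tan(π/2^{n−1})·z + o(z³) in Appendix C.) -/
/-!
Given `θ = t`, the event is `W ≤ z² / (1 - sin 2t)`, of probability `1 - exp (-z² / (1 - sin 2t))`.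
On `|t| ≤ π / 8` the denominator is bounded below, so this is `z² / (1 - sin 2t) + O(z⁴)`
uniformly in `t`. Since `1 - sin 2t = 2 cos² (t + π / 4)`, the function `tan (t + π / 4) / 2` is an
antiderivative of `1 / (1 - sin 2t)`, and its mean over `θ ~ U(-a, a)` is `tan (2a) / (2a)`;
here `2a = π / 2^(n-1)`.
-/

open MeasureTheory ProbabilityTheory Real Filter Asymptotics

open Set

lemma isProbabilityMeasure_unifOn {a b : ℝ} (hab : a < b) : IsProbabilityMeasure (unifOn a b) := by
  constructor
  rw [unifOn, Measure.smul_apply, Measure.restrict_apply_univ, Real.volume_Ioo, smul_eq_mul,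
    ENNReal.inv_mul_cancel (by simpa using hab) ENNReal.ofReal_ne_top]

lemma integral_unifOn {a b : ℝ} (hab : a ≤ b) (f : ℝ → ℝ) :
    ∫ t, f t ∂unifOn a b = (b - a)⁻¹ * ∫ t in Ioo a b, f t := by
  rw [unifOn, integral_smul_measure, ENNReal.toReal_inv, ENNReal.toReal_ofReal (sub_nonneg.2 hab),
    smul_eq_mul]

lemma ae_unifOn_of_forall_mem {a b : ℝ} {p : ℝ → Prop} (h : ∀ t ∈ Ioo a b, p t) :
    ∀ᵐ t ∂unifOn a b, p t :=
  Measure.ae_smul_measure (ae_restrict_of_forall_mem measurableSet_Ioo h) _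

lemma expMeasure_one_Iic (c : ℝ) : expMeasure 1 (Iic c) = ENNReal.ofReal (1 - exp (-c)) := by
  have := isProbabilityMeasure_expMeasure one_pos
  rw [← ofReal_cdf, cdf_expMeasure_eq one_pos, one_mul]
  split_ifs with hc
  · rfl
  · rw [ENNReal.ofReal_zero, eq_comm, ENNReal.ofReal_eq_zero, sub_nonpos, one_le_exp_iff]
    linarith

lemma prod_expMeasure_one_setOf_mul_le {α : Type*} [MeasurableSpace α] {μ : Measure α} [SFinite μ]
    {g : α → ℝ} (hg : Measurable g) (hpos : ∀ᵐ x ∂μ, 0 < g x) (c : ℝ) :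
    (μ.prod (expMeasure 1)) {p | p.2 * g p.1 ≤ c}
      = ∫⁻ x, ENNReal.ofReal (1 - exp (-(c / g x))) ∂μ := by
  have := isProbabilityMeasure_expMeasure one_pos
  rw [Measure.prod_apply (measurableSet_le (by fun_prop) measurable_const)]
  refine lintegral_congr_ae (hpos.mono fun x hx => ?_)
  have hslice : Prod.mk x ⁻¹' {p : α × ℝ | p.2 * g p.1 ≤ c} = Iic (c / g x) := by
    ext w
    simp [le_div_iff₀ hx]
  simp only [hslice, expMeasure_one_Iic]

lemma measure_mul_le_toReal_eq_integral {Ω α : Type*} [MeasurableSpace Ω] [MeasurableSpace α]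
    {P : Measure Ω} [IsProbabilityMeasure P] {W : Ω → ℝ} {X : Ω → α}
    (hW : Measurable W) (hX : Measurable X) (hWlaw : P.map W = expMeasure 1)
    (hindep : IndepFun W X P) {g : α → ℝ} (hg : Measurable g) (hpos : ∀ᵐ x ∂P.map X, 0 < g x)
    {c : ℝ} (hc : 0 ≤ c) :
    (P {ω | W ω * g (X ω) ≤ c}).toReal = ∫ x, (1 - exp (-(c / g x))) ∂P.map X := by
  have hjoint : P.map (fun ω => (X ω, W ω)) = (P.map X).prod (expMeasure 1) := by
    rw [← hWlaw]
    exact (indepFun_iff_map_prod_eq_prod_map_map hX.aemeasurable hW.aemeasurable).mp hindep.symm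
  have hS : MeasurableSet {p : α × ℝ | p.2 * g p.1 ≤ c} :=
    measurableSet_le (by fun_prop) measurable_const
  have hnonneg : ∀ᵐ x ∂P.map X, 0 ≤ 1 - exp (-(c / g x)) := hpos.mono fun x hx => by
    simpa using div_nonneg hc hx.le
  have hpre : {ω | W ω * g (X ω) ≤ c} = (fun ω => (X ω, W ω)) ⁻¹' {p | p.2 * g p.1 ≤ c} := rfl
  rw [hpre, ← Measure.map_apply (hX.prodMk hW) hS, hjoint,
    prod_expMeasure_one_setOf_mul_le hg hpos, integral_eq_lintegral_of_nonneg_ae hnonneg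
      (Measurable.aestronglyMeasurable (by fun_prop))]

lemma abs_one_sub_exp_neg_sub_le {x : ℝ} (hx : 0 ≤ x) : |1 - exp (-x) - x| ≤ x ^ 2 := by
  have hlow : 1 - x ≤ exp (-x) := by linarith [add_one_le_exp (-x)]
  have hup : exp (-x) * (1 + x) ≤ 1 := by
    calc exp (-x) * (1 + x) ≤ exp (-x) * exp x := by gcongr; linarith [add_one_le_exp x]
      _ = 1 := by rw [← exp_add, neg_add_cancel, exp_zero]
  rw [abs_le]
  constructor <;> nlinarith [exp_pos (-x)]

lemma abs_integral_one_sub_exp_neg_sub_le {α : Type*} [MeasurableSpace α] {μ : Measure α}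
    [IsFiniteMeasure μ] {h : α → ℝ} {M x : ℝ} (hx : 0 ≤ x) (hh : AEStronglyMeasurable h μ)
    (hbd : ∀ᵐ t ∂μ, 0 ≤ h t ∧ h t ≤ M) :
    |∫ t, (1 - exp (-(x * h t))) ∂μ - x * ∫ t, h t ∂μ| ≤ (x * M) ^ 2 * μ.real univ := by
  have hint : Integrable h μ :=
    .of_bound hh M (hbd.mono fun t ht => by rw [norm_of_nonneg ht.1]; exact ht.2)
  have hint' : Integrable (fun t => 1 - exp (-(x * h t))) μ := by
    refine .of_bound (by fun_prop) 1 (hbd.mono fun t ht => ?_)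
    have : exp (-(x * h t)) ≤ 1 := exp_le_one_iff.2 (by nlinarith [ht.1])
    rw [norm_of_nonneg (by linarith)]
    linarith [exp_pos (-(x * h t))]
  rw [← integral_const_mul, ← integral_sub hint' (hint.const_mul x), ← norm_eq_abs]
  refine norm_integral_le_of_norm_le_const (hbd.mono fun t ht => ?_)
  have hxh : 0 ≤ x * h t := mul_nonneg hx ht.1
  calc ‖1 - exp (-(x * h t)) - x * h t‖ ≤ (x * h t) ^ 2 := abs_one_sub_exp_neg_sub_le hxh
    _ ≤ (x * M) ^ 2 := by gcongr; exact ht.2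

lemma one_sub_sin_two_mul_eq (t : ℝ) : 1 - sin (2 * t) = 2 * cos (t + π / 4) ^ 2 := by
  rw [cos_sq, show 2 * (t + π / 4) = 2 * t + π / 2 by ring, cos_add_pi_div_two]
  ring

lemma cos_add_pi_div_four_pos {t : ℝ} (ht : |t| < π / 4) : 0 < cos (t + π / 4) := by
  rw [abs_lt] at ht
  exact cos_pos_of_mem_Ioo ⟨by linarith, by linarith⟩

lemma one_sub_sin_two_mul_pos {t : ℝ} (ht : |t| < π / 4) : 0 < 1 - sin (2 * t) := by
  rw [one_sub_sin_two_mul_eq]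
  have := cos_add_pi_div_four_pos ht
  positivity

lemma inv_one_sub_sin_two_mul_le {t : ℝ} (ht : |t| ≤ π / 8) : (1 - sin (2 * t))⁻¹ ≤ 5 := by
  have hsin : sin (2 * t) ≤ π / 4 :=
    calc sin (2 * t) ≤ |2 * t| := (le_abs_self _).trans abs_sin_le_abs
      _ ≤ π / 4 := by rw [abs_mul, abs_two]; linarith
  rw [inv_le_comm₀ (by linarith [pi_lt_d2]) (by norm_num)]
  linarith [pi_lt_d2]

lemma hasDerivAt_tan_add_pi_div_four_div_two {t : ℝ} (ht : |t| < π / 4) :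
    HasDerivAt (fun u => tan (u + π / 4) / 2) (1 - sin (2 * t))⁻¹ t := by
  have hcos := (cos_add_pi_div_four_pos ht).ne'
  have h := ((hasDerivAt_tan hcos).comp t ((hasDerivAt_id' t).add_const (π / 4))).div_const 2
  refine h.congr_deriv ?_
  rw [one_sub_sin_two_mul_eq]
  field_simp

lemma tan_add_pi_div_four_sub_tan_neg_add_pi_div_four {a : ℝ} (h₁ : cos (a + π / 4) ≠ 0)
    (h₂ : cos (-a + π / 4) ≠ 0) : tan (a + π / 4) - tan (-a + π / 4) = 2 * tan (2 * a) := by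
  have hcos : cos (2 * a) = 2 * cos (a + π / 4) * cos (-a + π / 4) := by
    simp only [cos_add, cos_two_mul, cos_neg, sin_neg, cos_pi_div_four, sin_pi_div_four]
    linear_combination (-(cos a ^ 2 - sin a ^ 2) / 2) * sq_sqrt (zero_le_two (α := ℝ))
      + sin_sq_add_cos_sq a
  rw [tan_eq_sin_div_cos, tan_eq_sin_div_cos, div_sub_div _ _ h₁ h₂, ← sin_sub,
    show a + π / 4 - (-a + π / 4) = 2 * a by ring, tan_eq_sin_div_cos, hcos]
  field_simp

lemma integral_inv_one_sub_sin_two_mul {a : ℝ} (ha₀ : 0 ≤ a) (ha : a < π / 4) :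
    ∫ t in -a..a, (1 - sin (2 * t))⁻¹ = tan (2 * a) := by
  have hmem : ∀ t ∈ uIcc (-a) a, |t| < π / 4 := fun t ht => by
    rw [uIcc_of_le (by linarith), mem_Icc] at ht
    exact abs_lt.2 ⟨by linarith, by linarith⟩
  rw [intervalIntegral.integral_eq_sub_of_hasDerivAt
      (fun t ht => hasDerivAt_tan_add_pi_div_four_div_two (hmem t ht))
      (ContinuousOn.intervalIntegrable <| ContinuousOn.inv₀ (by fun_prop)
        fun t ht => (one_sub_sin_two_mul_pos (hmem t ht)).ne'),
    ← sub_div, tan_add_pi_div_four_sub_tan_neg_add_pi_div_four]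
  · ring
  · exact (cos_add_pi_div_four_pos (hmem a right_mem_uIcc)).ne'
  · simpa using (cos_add_pi_div_four_pos (hmem (-a) left_mem_uIcc)).ne'

lemma integral_unifOn_inv_one_sub_sin_two_mul {a : ℝ} (ha₀ : 0 < a) (ha : a < π / 4) :
    ∫ t, (1 - sin (2 * t))⁻¹ ∂unifOn (-a) a = tan (2 * a) / (2 * a) := by
  rw [integral_unifOn (by linarith), ← integral_Ioc_eq_integral_Ioo,
    ← intervalIntegral.integral_of_le (by linarith), integral_inv_one_sub_sin_two_mul ha₀.le ha,
    sub_neg_eq_add, ← two_mul, inv_mul_eq_div]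

lemma abs_measure_sqrt_mul_one_sub_sin_le_sub_le {Ω : Type*} [MeasurableSpace Ω] {P : Measure Ω}
    [IsProbabilityMeasure P] {W θ : Ω → ℝ} (hW : Measurable W) (hθ : Measurable θ)
    (hWlaw : P.map W = expMeasure 1) {a : ℝ} (ha₀ : 0 < a) (ha : a ≤ π / 8)
    (hθlaw : P.map θ = unifOn (-a) a) (hindep : IndepFun W θ P) {z : ℝ} (hz : 0 ≤ z) :
    |(P {ω | √(W ω * (1 - sin (2 * θ ω))) ≤ z}).toReal - tan (2 * a) / (2 * a) * z ^ 2|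
      ≤ 25 * z ^ 4 := by
  have := isProbabilityMeasure_unifOn (neg_lt_self ha₀)
  have hsmall : ∀ t ∈ Ioo (-a) a, |t| ≤ π / 8 := fun t ht =>
    abs_le.2 ⟨by linarith [ht.1], by linarith [ht.2]⟩
  have hpos : ∀ t ∈ Ioo (-a) a, 0 < 1 - sin (2 * t) := fun t ht =>
    one_sub_sin_two_mul_pos ((hsmall t ht).trans_lt (by linarith [pi_pos]))
  have hprob : (P {ω | √(W ω * (1 - sin (2 * θ ω))) ≤ z}).toReal
      = ∫ t, (1 - exp (-(z ^ 2 * (1 - sin (2 * t))⁻¹))) ∂unifOn (-a) a := by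
    simp_rw [sqrt_le_left hz, ← div_eq_mul_inv, ← hθlaw]
    exact measure_mul_le_toReal_eq_integral hW hθ hWlaw hindep (by fun_prop)
      (hθlaw ▸ ae_unifOn_of_forall_mem hpos) (sq_nonneg z)
  rw [hprob, ← integral_unifOn_inv_one_sub_sin_two_mul ha₀ (by linarith [pi_pos]),
    mul_comm _ (z ^ 2)]
  calc _ ≤ (z ^ 2 * 5) ^ 2 * (unifOn (-a) a).real univ :=
        abs_integral_one_sub_exp_neg_sub_le (sq_nonneg z) (by fun_prop) <|
          ae_unifOn_of_forall_mem fun t ht =>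
            ⟨(inv_pos.2 (hpos t ht)).le, inv_one_sub_sin_two_mul_le (hsmall t ht)⟩
    _ = 25 * z ^ 4 := by rw [probReal_univ]; ring

/-- Small-argument behavior of the per-branch statistic for `n ≥ 3`:
`P(√(W(1 − sin 2θ)) ≤ z) = (2^{n−1}/π) tan(π/2^{n−1}) z² + o(z²)` as `z → 0⁺`. -/
theorem stmt16
    {Ω : Type*} [MeasurableSpace Ω] (P : Measure Ω) [IsProbabilityMeasure P]
    (n : ℕ) (hn : 3 ≤ n)
    (W θ : Ω → ℝ) (hW : Measurable W) (hθ : Measurable θ)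
    (hWlaw : Measure.map W P = expMeasure 1)
    (hθlaw : Measure.map θ P = unifOn (-(π / 2 ^ n)) (π / 2 ^ n))
    (hindep : IndepFun W θ P) :
    (fun z => (P {ω | Real.sqrt (W ω * (1 - Real.sin (2 * θ ω))) ≤ z}).toReal
        - (2 ^ (n - 1) / π) * Real.tan (π / 2 ^ (n - 1)) * z ^ 2)
      =o[nhdsWithin (0 : ℝ) (Set.Ioi 0)] fun z : ℝ => z ^ 2 := by
  set a := π / 2 ^ n
  have ha₀ : 0 < a := by positivity
  have ha : a ≤ π / 8 := div_le_div_of_nonneg_left pi_pos.le (by norm_num)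
    (by exact_mod_cast (pow_le_pow_right₀ one_le_two hn : 2 ^ 3 ≤ 2 ^ n))
  have hcoef : 2 ^ (n - 1) / π * tan (π / 2 ^ (n - 1)) = tan (2 * a) / (2 * a) := by
    have h2a : π / 2 ^ (n - 1) = 2 * a := by
      have h2n : (2 : ℝ) ^ n = 2 * 2 ^ (n - 1) := by rw [← pow_succ']; congr 1; omega
      simp only [a, h2n]
      field_simp
    rw [← inv_div, h2a, inv_mul_eq_div]
  refine (IsBigO.of_bound 25 ?_).trans_isLittleO
    ((isLittleO_pow_pow (by norm_num : 2 < 4)).mono nhdsWithin_le_nhds)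
  filter_upwards [self_mem_nhdsWithin] with z (hz : 0 < z)
  rw [hcoef]
  simpa [abs_of_pos hz] using
    abs_measure_sqrt_mul_one_sub_sin_le_sub_le hW hθ hWlaw ha₀ ha hθlaw hindep hz.le
end
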